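/- arXiv:2506.05036 — 7 statements merged into one kernel-verified Lean document; each statement's English description precedes it below -/
import Mathlib

section
/- In Euclidean geometry, for a two-circle configuration with radii r_i, r_j and exterior intersection angle Θ ∈ (0,π), the angle θ_ij defined by sin θ_ij = r_j sin Θ / sqrt(r_i² + r_j² + 2 r_i r_j cos Θ) satisfies: for any C > 1 there exists ε > 0 such that if |u_i' − u_i| ≤ ε and |u_j' − u_j| ≤ ε (where u = log r), then θ_ij(u_i', u_j') ≤ C · θ_ij(u_i, u_j). -/
open Real

noncomputable def circD (Θ t : ℝ) : ℝ := Real.exp (2*t) + 1 + 2 * Real.exp t * Real.cos Θ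

noncomputable def circPhi (Θ t : ℝ) : ℝ :=
  Real.arccos ((1 + Real.exp t * Real.cos Θ) / Real.sqrt (circD Θ t))

variable {Θ t : ℝ}

lemma circD_eq : circD Θ t = (Real.exp t + Real.cos Θ)^2 + Real.sin Θ^2 := by
  have h := Real.sin_sq_add_cos_sq Θ
  have : Real.exp (2*t) = Real.exp t ^ 2 := by
    rw [two_mul, Real.exp_add]; ring
  rw [circD, this]; nlinarith

lemma circD_ge (hs : 0 < Real.sin Θ) : Real.sin Θ ^ 2 ≤ circD Θ t := by
  rw [circD_eq]; nlinarith [sq_nonneg (Real.exp t + Real.cos Θ)]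

lemma circD_pos (hs : 0 < Real.sin Θ) : 0 < circD Θ t :=
  lt_of_lt_of_le (by positivity) (circD_ge hs)

lemma sqrt_circD_ge (hs : 0 < Real.sin Θ) : Real.sin Θ ≤ Real.sqrt (circD Θ t) := by
  have := Real.sqrt_le_sqrt (circD_ge hs (t := t))
  rwa [Real.sqrt_sq hs.le] at this

lemma sqrt_circD_pos (hs : 0 < Real.sin Θ) : 0 < Real.sqrt (circD Θ t) :=
  lt_of_lt_of_le hs (sqrt_circD_ge hs)

lemma circNum_sq_lt (hs : 0 < Real.sin Θ) :
    (1 + Real.exp t * Real.cos Θ)^2 < circD Θ t := by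
  rw [circD_eq]
  have h := Real.sin_sq_add_cos_sq Θ
  have hid : ((Real.exp t + Real.cos Θ)^2 + Real.sin Θ^2) - (1 + Real.exp t * Real.cos Θ)^2
      = (Real.exp t * Real.sin Θ)^2 := by linear_combination (1 - Real.exp t ^ 2) * h
  have hpos : 0 < (Real.exp t * Real.sin Θ)^2 := by positivity
  linarith

lemma circArg_lt_one (hs : 0 < Real.sin Θ) :
    (1 + Real.exp t * Real.cos Θ) / Real.sqrt (circD Θ t) < 1 := by
  rw [div_lt_one (sqrt_circD_pos hs)]
  have h1 := Real.sqrt_lt_sqrt (sq_nonneg (1 + Real.exp t * Real.cos Θ)) (circNum_sq_lt (hs := hs) (t := t))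
  rw [Real.sqrt_sq_eq_abs] at h1
  exact lt_of_le_of_lt (le_abs_self _) h1

lemma circArg_gt_neg_one (hs : 0 < Real.sin Θ) :
    -1 < (1 + Real.exp t * Real.cos Θ) / Real.sqrt (circD Θ t) := by
  rw [neg_lt, ← neg_div, div_lt_one (sqrt_circD_pos hs)]
  have h1 := Real.sqrt_lt_sqrt (sq_nonneg (1 + Real.exp t * Real.cos Θ)) (circNum_sq_lt (hs := hs) (t := t))
  rw [Real.sqrt_sq_eq_abs] at h1
  exact lt_of_le_of_lt (neg_le_abs _) h1

lemma sin_circPhi (hs : 0 < Real.sin Θ) :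
    Real.sin (circPhi Θ t) = Real.exp t * Real.sin Θ / Real.sqrt (circD Θ t) := by
  have hD := circD_pos (hs := hs) (t := t)
  have hq := sqrt_circD_pos (hs := hs) (t := t)
  have hq2 := Real.sq_sqrt hD.le
  have key : 1 - ((1 + Real.exp t * Real.cos Θ) / Real.sqrt (circD Θ t))^2
      = (Real.exp t * Real.sin Θ / Real.sqrt (circD Θ t))^2 := by
    have h := Real.sin_sq_add_cos_sq Θ
    field_simp
    rw [circD_eq] at hq2 ⊢; linear_combination (1 - Real.exp t ^ 2) * h + hq2
  rw [circPhi, Real.sin_arccos, key, Real.sqrt_sq (by positivity)]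

lemma circPhi_pos (hs : 0 < Real.sin Θ) : 0 < circPhi Θ t :=
  Real.arccos_pos.2 (circArg_lt_one hs)

lemma circPhi_lt_pi (hs : 0 < Real.sin Θ) : circPhi Θ t < Real.pi := by
  rcases lt_or_eq_of_le (Real.arccos_le_pi ((1 + Real.exp t * Real.cos Θ) / Real.sqrt (circD Θ t))) with h | h
  · exact h
  · exfalso
    have h1 : Real.sin (circPhi Θ t) = 0 := by rw [circPhi, h, Real.sin_pi]
    rw [sin_circPhi hs] at h1
    have := sqrt_circD_pos (hs := hs) (t := t)
    have := Real.exp_pos t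
    have : Real.exp t * Real.sin Θ / Real.sqrt (circD Θ t) > 0 := by positivity
    linarith

lemma hasDerivAt_circPhi (hs : 0 < Real.sin Θ) :
    HasDerivAt (circPhi Θ) (Real.exp t * Real.sin Θ / circD Θ t) t := by
  have hD := circD_pos (hs := hs) (t := t)
  have hq := sqrt_circD_pos (hs := hs) (t := t)
  have hq2 : Real.sqrt (circD Θ t) ^ 2 = circD Θ t := Real.sq_sqrt hD.le
  have h2t : HasDerivAt (fun x : ℝ => 2 * x) 2 t := by
    simpa using (hasDerivAt_id t).const_mul 2
  have hexp2 : HasDerivAt (fun x : ℝ => Real.exp (2 * x)) (Real.exp (2 * t) * 2) t :=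
    (Real.hasDerivAt_exp (2 * t)).comp t h2t
  have hDd : HasDerivAt (circD Θ) (Real.exp (2 * t) * 2 + 2 * Real.exp t * Real.cos Θ) t := by
    have := (hexp2.add_const 1).add (((Real.hasDerivAt_exp t).const_mul 2).mul_const (Real.cos Θ))
    exact this
  have hsqrt : HasDerivAt (fun x => Real.sqrt (circD Θ x))
      ((Real.exp (2 * t) * 2 + 2 * Real.exp t * Real.cos Θ) / (2 * Real.sqrt (circD Θ t))) t :=
    hDd.sqrt hD.ne'
  have hnum : HasDerivAt (fun x : ℝ => 1 + Real.exp x * Real.cos Θ) (Real.exp t * Real.cos Θ) t :=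
    ((Real.hasDerivAt_exp t).mul_const _).const_add 1
  have hg : HasDerivAt (fun x => (1 + Real.exp x * Real.cos Θ) / Real.sqrt (circD Θ x))
      ((Real.exp t * Real.cos Θ * Real.sqrt (circD Θ t) -
        (1 + Real.exp t * Real.cos Θ) *
          ((Real.exp (2 * t) * 2 + 2 * Real.exp t * Real.cos Θ) / (2 * Real.sqrt (circD Θ t)))) /
        Real.sqrt (circD Θ t) ^ 2) t :=
    hnum.div hsqrt hq.ne'
  have harc := Real.hasDerivAt_arccos
    (x := (1 + Real.exp t * Real.cos Θ) / Real.sqrt (circD Θ t))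
    (ne_of_gt (circArg_gt_neg_one hs)) (ne_of_lt (circArg_lt_one hs))
  have hphi := harc.comp t hg
  have hroot : Real.sqrt (1 - ((1 + Real.exp t * Real.cos Θ) / Real.sqrt (circD Θ t)) ^ 2)
      = Real.exp t * Real.sin Θ / Real.sqrt (circD Θ t) := by
    rw [← Real.sin_arccos]; exact sin_circPhi hs
  refine hphi.congr_deriv ?_
  symm
  rw [hroot]
  have h := Real.sin_sq_add_cos_sq Θ
  have he := Real.exp_pos t
  have h2e : Real.exp (2 * t) = Real.exp t ^ 2 := by rw [two_mul, Real.exp_add]; ring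
  field_simp
  rw [circD_eq] at hq2 ⊢
  rw [h2e]
  linear_combination (Real.exp t ^ 2 * Real.sin Θ ^ 2 +
      ((Real.exp t + Real.cos Θ)^2 + Real.sin Θ^2) * Real.exp t * Real.cos Θ) * hq2 +
    (((Real.exp t + Real.cos Θ)^2 + Real.sin Θ^2) * (Real.exp t ^ 2 + Real.exp t * Real.cos Θ)) * h

lemma circPhi_deriv_bound (hs : 0 < Real.sin Θ) :
    Real.exp t * Real.sin Θ / circD Θ t * Real.sin Θ ≤ circPhi Θ t := by
  have hD := circD_pos (hs := hs) (t := t)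
  have hq := sqrt_circD_pos (hs := hs) (t := t)
  have hq2 : Real.sqrt (circD Θ t) ^ 2 = circD Θ t := Real.sq_sqrt hD.le
  have hle := sqrt_circD_ge (hs := hs) (t := t)
  have hsin : Real.exp t * Real.sin Θ / Real.sqrt (circD Θ t) ≤ circPhi Θ t := by
    rw [← sin_circPhi hs]; exact Real.sin_le (circPhi_pos hs).le
  have he := Real.exp_pos t
  have h1 : Real.exp t * Real.sin Θ / circD Θ t * Real.sin Θ
      = (Real.exp t * Real.sin Θ / Real.sqrt (circD Θ t)) * (Real.sin Θ / Real.sqrt (circD Θ t)) := by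
    field_simp
    exact hq2
  rw [h1]
  have h2 : Real.sin Θ / Real.sqrt (circD Θ t) ≤ 1 := by
    rw [div_le_one hq]; exact hle
  calc (Real.exp t * Real.sin Θ / Real.sqrt (circD Θ t)) * (Real.sin Θ / Real.sqrt (circD Θ t))
      ≤ (Real.exp t * Real.sin Θ / Real.sqrt (circD Θ t)) * 1 := by
        apply mul_le_mul_of_nonneg_left h2 (by positivity)
    _ = Real.exp t * Real.sin Θ / Real.sqrt (circD Θ t) := mul_one _
    _ ≤ circPhi Θ t := hsin

lemma circPsi_deriv_bound (hs : 0 < Real.sin Θ) :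
    Real.exp t * Real.sin Θ / circD Θ t * Real.sin Θ ≤ Real.pi - circPhi Θ t := by
  have hD := circD_pos (hs := hs) (t := t)
  have hq := sqrt_circD_pos (hs := hs) (t := t)
  have hq2 : Real.sqrt (circD Θ t) ^ 2 = circD Θ t := Real.sq_sqrt hD.le
  have hle := sqrt_circD_ge (hs := hs) (t := t)
  have hsin : Real.exp t * Real.sin Θ / Real.sqrt (circD Θ t) ≤ Real.pi - circPhi Θ t := by
    have h0 : 0 ≤ Real.pi - circPhi Θ t := by
      have := Real.arccos_le_pi ((1 + Real.exp t * Real.cos Θ) / Real.sqrt (circD Θ t))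
      rw [circPhi]; linarith
    have := Real.sin_le h0
    rwa [Real.sin_pi_sub, sin_circPhi hs] at this
  have he := Real.exp_pos t
  have h1 : Real.exp t * Real.sin Θ / circD Θ t * Real.sin Θ
      = (Real.exp t * Real.sin Θ / Real.sqrt (circD Θ t)) * (Real.sin Θ / Real.sqrt (circD Θ t)) := by
    field_simp
    exact hq2
  rw [h1]
  have h2 : Real.sin Θ / Real.sqrt (circD Θ t) ≤ 1 := by
    rw [div_le_one hq]; exact hle
  calc (Real.exp t * Real.sin Θ / Real.sqrt (circD Θ t)) * (Real.sin Θ / Real.sqrt (circD Θ t))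
      ≤ (Real.exp t * Real.sin Θ / Real.sqrt (circD Θ t)) * 1 := by
        apply mul_le_mul_of_nonneg_left h2 (by positivity)
    _ = Real.exp t * Real.sin Θ / Real.sqrt (circD Θ t) := mul_one _
    _ ≤ Real.pi - circPhi Θ t := hsin

lemma log_circPhi_lip (hs : 0 < Real.sin Θ) (a b : ℝ) :
    |Real.log (circPhi Θ b) - Real.log (circPhi Θ a)| ≤ (1 / Real.sin Θ) * |b - a| := by
  have := Convex.norm_image_sub_le_of_norm_hasDerivWithin_le
    (f := fun x => Real.log (circPhi Θ x))
    (f' := fun x => (Real.exp x * Real.sin Θ / circD Θ x) / circPhi Θ x)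
    (s := Set.univ) (C := 1 / Real.sin Θ)
    (fun x _ => ((hasDerivAt_circPhi (t := x) hs).log (circPhi_pos hs).ne').hasDerivWithinAt)
    (fun x _ => by
      have hφ := circPhi_pos (hs := hs) (t := x)
      have hD := circD_pos (hs := hs) (t := x)
      have he := Real.exp_pos x
      rw [Real.norm_eq_abs, abs_of_nonneg (by positivity)]
      rw [div_le_div_iff₀ hφ hs]
      have := circPhi_deriv_bound (hs := hs) (t := x)
      linarith)
    convex_univ (Set.mem_univ a) (Set.mem_univ b)
  simpa [Real.norm_eq_abs] using this

lemma log_circPsi_lip (hs : 0 < Real.sin Θ) (a b : ℝ) :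
    |Real.log (Real.pi - circPhi Θ b) - Real.log (Real.pi - circPhi Θ a)|
      ≤ (1 / Real.sin Θ) * |b - a| := by
  have := Convex.norm_image_sub_le_of_norm_hasDerivWithin_le
    (f := fun x => Real.log (Real.pi - circPhi Θ x))
    (f' := fun x => (-(Real.exp x * Real.sin Θ / circD Θ x)) / (Real.pi - circPhi Θ x))
    (s := Set.univ) (C := 1 / Real.sin Θ)
    (fun x _ => (((hasDerivAt_circPhi (t := x) hs).const_sub Real.pi).log
      (by have := circPhi_lt_pi (hs := hs) (t := x); intro hh; rw [sub_eq_zero] at hh; linarith)).hasDerivWithinAt)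
    (fun x _ => by
      have hφ := circPhi_lt_pi (hs := hs) (t := x)
      have hD := circD_pos (hs := hs) (t := x)
      have he := Real.exp_pos x
      have hψ : 0 < Real.pi - circPhi Θ x := by linarith
      show ‖(-(Real.exp x * Real.sin Θ / circD Θ x)) / (Real.pi - circPhi Θ x)‖ ≤ 1 / Real.sin Θ
      rw [Real.norm_eq_abs, neg_div, abs_neg, abs_of_nonneg (by positivity)]
      rw [div_le_div_iff₀ hψ hs]
      have := circPsi_deriv_bound (hs := hs) (t := x)
      linarith)
    convex_univ (Set.mem_univ a) (Set.mem_univ b)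
  simpa [Real.norm_eq_abs] using this

lemma arcsin_sin_le {x : ℝ} (hx : 0 ≤ x) : Real.arcsin (Real.sin x) ≤ x := by
  rcases le_total x (Real.pi / 2) with h | h
  · rw [Real.arcsin_sin (by linarith [Real.pi_pos]) h]
  · exact le_trans (Real.arcsin_le_pi_div_two _) h

/-- Euclidean two-circle half-angle θ_ij(u_i,u_j): for any C > 1 there is ε > 0
such that perturbing (u_i,u_j) by at most ε multiplies θ_ij by at most C. -/
theorem stmt1 (Θ : ℝ) (hΘ : Θ ∈ Set.Ioo 0 Real.pi) :
    let θ : ℝ → ℝ → ℝ := fun ui uj =>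
      Real.arcsin (Real.exp uj * Real.sin Θ /
        Real.sqrt (Real.exp (2 * ui) + Real.exp (2 * uj) +
          2 * Real.exp (ui + uj) * Real.cos Θ))
    ∀ C : ℝ, 1 < C → ∃ ε > 0, ∀ ui uj ui' uj' : ℝ,
      |ui' - ui| ≤ ε → |uj' - uj| ≤ ε → θ ui' uj' ≤ C * θ ui uj := by
  intro θ C hC
  obtain ⟨hΘ0, hΘπ⟩ := hΘ
  have hs : 0 < Real.sin Θ := Real.sin_pos_of_pos_of_lt_pi hΘ0 hΘπ
  have hlogC : 0 < Real.log C := Real.log_pos hC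
  have hC0 : 0 < C := lt_trans one_pos hC
  refine ⟨Real.sin Θ * Real.log C / 2, by positivity, ?_⟩
  intro ui uj ui' uj' hi hj
  set t : ℝ := uj - ui with ht_def
  set t' : ℝ := uj' - ui' with ht'_def
  -- rewrite θ in terms of circPhi
  have hθeq : ∀ a b : ℝ, θ a b = Real.arcsin (Real.sin (circPhi Θ (b - a))) := by
    intro a b
    have hD := circD_pos (hs := hs) (t := b - a)
    have hea := Real.exp_pos a
    have heb := Real.exp_pos b
    rw [sin_circPhi hs]
    have hfac : Real.exp (2*a) + Real.exp (2*b) + 2*Real.exp (a+b)*Real.cos Θ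
        = Real.exp a ^ 2 * circD Θ (b - a) := by
      have e1 : Real.exp (2*a) = Real.exp a ^ 2 := by rw [two_mul, Real.exp_add]; ring
      have e2 : Real.exp (2*b) = Real.exp b ^ 2 := by rw [two_mul, Real.exp_add]; ring
      have e3 : Real.exp (a+b) = Real.exp a * Real.exp b := Real.exp_add a b
      have e4 : Real.exp (b-a) = Real.exp b / Real.exp a := Real.exp_sub b a
      have e5 : Real.exp (2*(b-a)) = (Real.exp b / Real.exp a)^2 := by
        rw [two_mul, Real.exp_add, Real.exp_sub]; ring
      rw [circD, e1, e2, e3, e4, e5]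
      field_simp
      ring
    show Real.arcsin (Real.exp b * Real.sin Θ /
        Real.sqrt (Real.exp (2*a) + Real.exp (2*b) + 2*Real.exp (a+b)*Real.cos Θ))
      = Real.arcsin (Real.exp (b - a) * Real.sin Θ / Real.sqrt (circD Θ (b - a)))
    congr 1
    rw [hfac, Real.sqrt_mul (by positivity), Real.sqrt_sq hea.le, Real.exp_sub]
    rw [div_mul_eq_mul_div, div_div]
  have hq := sqrt_circD_pos (hs := hs) (t := t)
  -- distance bound
  have hdist : |t' - t| ≤ Real.sin Θ * Real.log C := by
    have h1 : t' - t = (uj' - uj) - (ui' - ui) := by rw [ht_def, ht'_def]; ring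
    calc |t' - t| = |(uj' - uj) - (ui' - ui)| := by rw [h1]
      _ ≤ |uj' - uj| + |ui' - ui| := abs_sub _ _
      _ ≤ Real.sin Θ * Real.log C / 2 + Real.sin Θ * Real.log C / 2 := add_le_add hj hi
      _ = Real.sin Θ * Real.log C := by ring
  -- multiplicative bounds
  have hmul : ∀ f : ℝ → ℝ, (∀ x, 0 < f x) →
      (|Real.log (f t') - Real.log (f t)| ≤ (1 / Real.sin Θ) * |t' - t|) →
      f t' ≤ C * f t := by
    intro f hf hlip
    have h1 : Real.log (f t') - Real.log (f t) ≤ Real.log C := by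
      have h2 : (1 / Real.sin Θ) * |t' - t| ≤ Real.log C := by
        rw [div_mul_eq_mul_div, one_mul, div_le_iff₀ hs]
        calc |t' - t| ≤ Real.sin Θ * Real.log C := hdist
          _ = Real.log C * Real.sin Θ := by ring
      linarith [le_abs_self (Real.log (f t') - Real.log (f t)), hlip]
    have h3 : Real.log (f t') ≤ Real.log (C * f t) := by
      rw [Real.log_mul hC0.ne' (hf t).ne']; linarith
    calc f t' = Real.exp (Real.log (f t')) := (Real.exp_log (hf t')).symm
      _ ≤ Real.exp (Real.log (C * f t)) := Real.exp_le_exp.2 h3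
      _ = C * f t := Real.exp_log (mul_pos hC0 (hf t))
  have hφmul : circPhi Θ t' ≤ C * circPhi Θ t :=
    hmul _ (fun x => circPhi_pos hs) (log_circPhi_lip hs t t')
  have hψmul : Real.pi - circPhi Θ t' ≤ C * (Real.pi - circPhi Θ t) :=
    hmul (fun x => Real.pi - circPhi Θ x) (fun x => by show 0 < Real.pi - circPhi Θ x; linarith [circPhi_lt_pi (hs := hs) (t := x)]) (log_circPsi_lip hs t t')
  -- upper bounds on θ ui' uj'
  have hup1 : θ ui' uj' ≤ circPhi Θ t' := by
    rw [hθeq]; exact arcsin_sin_le (circPhi_pos hs).le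
  have hup2 : θ ui' uj' ≤ Real.pi - circPhi Θ t' := by
    rw [hθeq, ← Real.sin_pi_sub]
    exact arcsin_sin_le (by linarith [circPhi_lt_pi (hs := hs) (t := t')])
  -- θ ui uj equals circPhi or π - circPhi
  rcases le_total (circPhi Θ t) (Real.pi / 2) with h | h
  · have heq : θ ui uj = circPhi Θ t := by
      rw [hθeq]
      exact Real.arcsin_sin (by linarith [circPhi_pos (hs := hs) (t := t)]) h
    rw [heq]; exact le_trans hup1 hφmul
  · have heq : θ ui uj = Real.pi - circPhi Θ t := by
      rw [hθeq, ← Real.sin_pi_sub]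
      refine Real.arcsin_sin ?_ (by linarith)
      have := Real.arccos_le_pi ((1 + Real.exp t * Real.cos Θ) / Real.sqrt (circD Θ t))
      rw [circPhi] at *
      linarith [Real.pi_pos]
    rw [heq]; exact le_trans hup2 hψmul
end

section
/- In hyperbolic geometry, for a two-circle configuration with equal radii r_i = r_j = t > 0 and exterior intersection angle Θ ∈ (0,π), the half-angle θ(t) satisfies sin²θ(t) = sin²Θ / (2(1+cos Θ) + (1+cos Θ)² sinh² t). Consequently θ(t) is strictly decreasing in t, lim_{t→0⁺} θ(t) = Θ/2, and lim_{t→+∞} θ(t) = 0. -/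
open Real Filter

/-- Hyperbolic two-circle configuration with equal radii t: the half-angle θ(t)
satisfies sin² θ(t) = sin²Θ / (2(1+cosΘ) + (1+cosΘ)² sinh² t), is strictly
decreasing, tends to Θ/2 as t → 0⁺ and to 0 as t → ∞. -/
theorem stmt2 (Θ : ℝ) (hΘ : Θ ∈ Set.Ioo 0 Real.pi) :
    let θ : ℝ → ℝ := fun t =>
      Real.arcsin (Real.sinh t * Real.sin Θ /
        Real.sqrt ((Real.cosh t ^ 2 + Real.cos Θ * Real.sinh t ^ 2) ^ 2 - 1))
    (∀ t > 0, Real.sin (θ t) ^ 2 =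
        Real.sin Θ ^ 2 /
          (2 * (1 + Real.cos Θ) + (1 + Real.cos Θ) ^ 2 * Real.sinh t ^ 2)) ∧
    StrictAntiOn θ (Set.Ioi 0) ∧
    Filter.Tendsto θ (nhdsWithin 0 (Set.Ioi 0)) (nhds (Θ / 2)) ∧
    Filter.Tendsto θ Filter.atTop (nhds 0) := by
  intro θ
  obtain ⟨hΘ0, hΘπ⟩ := hΘ
  have hsinΘ : 0 < Real.sin Θ := Real.sin_pos_of_pos_of_lt_pi hΘ0 hΘπ
  have hpyth := Real.sin_sq_add_cos_sq Θ
  have hcosgt : -1 < Real.cos Θ := by nlinarith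
  have hcoslt : Real.cos Θ < 1 := by nlinarith
  have hP : 0 < 1 + Real.cos Θ := by linarith
  have hQ : 0 < 1 - Real.cos Θ := by linarith
  have hsq : Real.sin Θ ^ 2 = (1 + Real.cos Θ) * (1 - Real.cos Θ) := by nlinarith
  set D : ℝ → ℝ := fun t => 2 * (1 + Real.cos Θ) + (1 + Real.cos Θ) ^ 2 * Real.sinh t ^ 2
    with hDdef
  have hD : ∀ t, 0 < D t := by
    intro t
    have h1 : 0 ≤ (1 + Real.cos Θ) ^ 2 * Real.sinh t ^ 2 := by positivity
    simp only [hDdef]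
    nlinarith
  have hlt : ∀ t, Real.sin Θ ^ 2 / D t < 1 := by
    intro t
    rw [div_lt_one (hD t)]
    have h1 : 0 ≤ (1 + Real.cos Θ) ^ 2 * Real.sinh t ^ 2 := by positivity
    simp only [hDdef]
    nlinarith
  have harg : ∀ t, Real.sqrt (Real.sin Θ ^ 2 / D t) ∈ Set.Icc (-1 : ℝ) 1 := by
    intro t
    constructor
    · linarith [Real.sqrt_nonneg (Real.sin Θ ^ 2 / D t)]
    · exact Real.sqrt_le_one.mpr (le_of_lt (hlt t))
  have key : ∀ t ∈ Set.Ioi (0 : ℝ), θ t = Real.arcsin (Real.sqrt (Real.sin Θ ^ 2 / D t)) := by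
    intro t ht
    have hs : 0 < Real.sinh t := Real.sinh_pos_iff.mpr ht
    have hE : (Real.cosh t ^ 2 + Real.cos Θ * Real.sinh t ^ 2) ^ 2 - 1
        = Real.sinh t ^ 2 * D t := by
      rw [Real.cosh_sq]; simp only [hDdef]; ring
    have hsqD : 0 < Real.sqrt (D t) := Real.sqrt_pos.mpr (hD t)
    show Real.arcsin _ = _
    congr 1
    rw [hE, Real.sqrt_mul (sq_nonneg _), Real.sqrt_sq hs.le,
      Real.sqrt_div (sq_nonneg _), Real.sqrt_sq hsinΘ.le]
    field_simp
  refine ⟨?_, ?_, ?_, ?_⟩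
  · intro t ht
    rw [key t ht, Real.sin_arcsin (harg t).1 (harg t).2,
      Real.sq_sqrt (by positivity : (0:ℝ) ≤ Real.sin Θ ^ 2 / D t)]
  · intro a ha b hb hab
    rw [key a ha, key b hb]
    have hsab : Real.sinh a < Real.sinh b := Real.sinh_lt_sinh.mpr hab
    have hsa : 0 < Real.sinh a := Real.sinh_pos_iff.mpr ha
    have hDab : D a < D b := by
      have h2 : Real.sinh a ^ 2 < Real.sinh b ^ 2 := by nlinarith
      have := mul_lt_mul_of_pos_left h2 (pow_pos hP 2)
      simp only [hDdef]
      linarith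
    have hinner : Real.sin Θ ^ 2 / D b < Real.sin Θ ^ 2 / D a :=
      div_lt_div_of_pos_left (by positivity) (hD a) hDab
    exact Real.strictMonoOn_arcsin (harg b) (harg a)
      (Real.sqrt_lt_sqrt (by positivity) hinner)
  · -- limit at 0+
    have hcont : Continuous (fun t => Real.arcsin (Real.sqrt (Real.sin Θ ^ 2 / D t))) := by
      apply Real.continuous_arcsin.comp
      apply Real.continuous_sqrt.comp
      exact continuous_const.div (by fun_prop) (fun t => (hD t).ne')
    have hval : Real.arcsin (Real.sqrt (Real.sin Θ ^ 2 / D 0)) = Θ / 2 := by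
      have hD0 : D 0 = 2 * (1 + Real.cos Θ) := by simp [hDdef]
      have hhalf : Real.sin Θ ^ 2 / D 0 = (1 - Real.cos Θ) / 2 := by
        rw [hD0]
        field_simp
        nlinarith
      rw [hhalf, ← Real.sin_half_eq_sqrt hΘ0.le (by linarith [Real.pi_pos]),
        Real.arcsin_sin (by linarith [Real.pi_pos]) (by linarith)]
    have h0 : Filter.Tendsto (fun t => Real.arcsin (Real.sqrt (Real.sin Θ ^ 2 / D t)))
        (nhdsWithin 0 (Set.Ioi 0)) (nhds (Θ / 2)) := by
      have := (hcont.tendsto 0).mono_left (nhdsWithin_le_nhds (s := Set.Ioi 0))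
      rwa [hval] at this
    apply h0.congr'
    filter_upwards [self_mem_nhdsWithin] with t ht
    exact (key t ht).symm
  · -- limit at ∞
    have hsinhtop : Filter.Tendsto Real.sinh atTop atTop := by
      apply tendsto_atTop_mono' atTop _ tendsto_id
      filter_upwards [eventually_gt_atTop 0] with x hx
      exact (Real.self_lt_sinh_iff.mpr hx).le
    have hsinh2 : Filter.Tendsto (fun t => Real.sinh t ^ 2) atTop atTop :=
      (tendsto_pow_atTop two_ne_zero).comp hsinhtop
    have hDtop : Filter.Tendsto D atTop atTop := by
      simp only [hDdef]
      exact tendsto_atTop_add_const_left _ _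
        (hsinh2.const_mul_atTop (by positivity))
    have hinner : Filter.Tendsto (fun t => Real.sin Θ ^ 2 / D t) atTop (nhds 0) :=
      Filter.Tendsto.div_atTop tendsto_const_nhds hDtop
    have hsqrt : Filter.Tendsto (fun t => Real.sqrt (Real.sin Θ ^ 2 / D t)) atTop (nhds 0) := by
      have := (Real.continuous_sqrt.tendsto 0).comp hinner
      simpa [Function.comp_def] using this
    have hf : Filter.Tendsto (fun t => Real.arcsin (Real.sqrt (Real.sin Θ ^ 2 / D t)))
        atTop (nhds 0) := by
      have := (Real.continuous_arcsin.tendsto 0).comp hsqrt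
      simpa [Function.comp_def] using this
    apply hf.congr'
    filter_upwards [eventually_gt_atTop 0] with t ht
    exact (key t ht).symm
end

section
/- In hyperbolic geometry, for a two-circle configuration with radii r_i, r_j and exterior intersection angle Θ ∈ (0,π), the angle θ_ij determined by sin θ_ij = sinh r_j sin Θ / sinh l (where cosh l = cosh r_i cosh r_j + cos Θ sinh r_i sinh r_j) satisfies: for every ε > 0 there exists L > 0 such that r_i > L implies θ_ij < ε, uniformly in r_j > 0. -/
open Real

/-- Hyperbolic two-circle configuration: for every ε > 0 there is L > 0 such
that r_i > L forces the half-angle θ_ij < ε, uniformly in r_j > 0. -/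
theorem stmt3 (Θ : ℝ) (hΘ : Θ ∈ Set.Ioo 0 Real.pi) :
    let θ : ℝ → ℝ → ℝ := fun ri rj =>
      Real.arcsin (Real.sinh rj * Real.sin Θ /
        Real.sqrt ((Real.cosh ri * Real.cosh rj +
          Real.cos Θ * Real.sinh ri * Real.sinh rj) ^ 2 - 1))
    ∀ ε > 0, ∃ L > 0, ∀ ri rj : ℝ, L < ri → 0 < rj → θ ri rj < ε := by
  intro θ ε hε
  obtain ⟨hΘ0, hΘπ⟩ := hΘ
  have hsinΘ : 0 < Real.sin Θ := Real.sin_pos_of_pos_of_lt_pi hΘ0 hΘπ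
  have hcos : |Real.cos Θ| < 1 := by
    rw [abs_lt]
    constructor
    · nlinarith [Real.sin_sq_add_cos_sq Θ, Real.sin_le_one Θ]
    · nlinarith [Real.sin_sq_add_cos_sq Θ, Real.sin_le_one Θ]
  have hb : 0 < 1 - |Real.cos Θ| := by linarith
  set b : ℝ := 1 - |Real.cos Θ| with hbdef
  have hε'0 : 0 < min ε (π/2) := lt_min hε (by positivity)
  have hε'le : min ε (π/2) ≤ π/2 := min_le_right _ _
  have hε'leε : min ε (π/2) ≤ ε := min_le_left _ _
  set ε' : ℝ := min ε (π/2) with hε'def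
  have hsinε' : 0 < Real.sin ε' :=
    Real.sin_pos_of_pos_of_lt_pi hε'0 (lt_of_le_of_lt hε'le (by linarith [Real.pi_pos]))
  set M : ℝ := max (Real.sqrt 2 / b) (Real.sqrt 2 * Real.sin Θ / (b * Real.sin ε') + 1)
    with hMdef
  have hM0 : 0 < M := lt_of_lt_of_le (by positivity) (le_max_left _ _)
  have hMge1 : Real.sqrt 2 / b ≤ M := le_max_left _ _
  have hMge2 : Real.sqrt 2 * Real.sin Θ / (b * Real.sin ε') + 1 ≤ M := le_max_right _ _
  clear_value b ε' M
  clear hε'def hMdef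
  refine ⟨Real.arsinh M, Real.arsinh_pos_iff.2 hM0, ?_⟩
  intro ri rj hri hrj
  have hsri : M < Real.sinh ri := by
    calc M = Real.sinh (Real.arsinh M) := (Real.sinh_arsinh M).symm
    _ < Real.sinh ri := Real.sinh_lt_sinh.2 hri
  have hri0 : 0 < ri := lt_trans (Real.arsinh_pos_iff.2 hM0) hri
  have hsri0 : 0 < Real.sinh ri := Real.sinh_pos_iff.2 hri0
  have hsrj0 : 0 < Real.sinh rj := Real.sinh_pos_iff.2 hrj
  have hcsi : Real.sinh ri < Real.cosh ri := Real.sinh_lt_cosh ri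
  have hcsj : Real.sinh rj < Real.cosh rj := Real.sinh_lt_cosh rj
  have hchj1 : 1 ≤ Real.cosh rj := Real.one_le_cosh rj
  have habs : -|Real.cos Θ| ≤ Real.cos Θ := neg_abs_le _
  have habs0 : 0 ≤ |Real.cos Θ| := abs_nonneg _
  obtain ⟨C, hCdef⟩ : ∃ C : ℝ, C = Real.cosh ri * Real.cosh rj +
      Real.cos Θ * Real.sinh ri * Real.sinh rj := ⟨_, rfl⟩
  have hss : Real.sinh ri * Real.sinh rj ≤ Real.cosh ri * Real.cosh rj :=
    mul_le_mul hcsi.le hcsj.le hsrj0.le (Real.cosh_pos ri).le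
  have hC1' : b * (Real.cosh ri * Real.cosh rj) ≤ C := by
    rw [hCdef, hbdef]
    have h1 := mul_le_mul_of_nonneg_left hss habs0
    nlinarith [mul_pos hsri0 hsrj0]
  have hC1 : b * (Real.sinh ri * Real.sinh rj) ≤ C :=
    le_trans (mul_le_mul_of_nonneg_left hss hb.le) hC1'
  have hsqrt2 : Real.sqrt 2 / b < Real.sinh ri := lt_of_le_of_lt hMge1 hsri
  have hCsqrt2 : Real.sqrt 2 ≤ C := by
    rw [div_lt_iff₀ hb] at hsqrt2
    have h3 : Real.cosh ri ≤ Real.cosh ri * Real.cosh rj :=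
      le_mul_of_one_le_right (Real.cosh_pos ri).le hchj1
    have h2 : b * Real.sinh ri ≤ b * (Real.cosh ri * Real.cosh rj) :=
      mul_le_mul_of_nonneg_left (hcsi.le.trans h3) hb.le
    nlinarith
  have hC2 : 2 ≤ C ^ 2 := by
    have h := mul_self_le_mul_self (Real.sqrt_nonneg 2) hCsqrt2
    rw [Real.mul_self_sqrt (by norm_num)] at h
    nlinarith
  have hC0 : 0 < C := lt_of_lt_of_le (Real.sqrt_pos.2 (by norm_num)) hCsqrt2
  have hD : b * (Real.sinh ri * Real.sinh rj) / Real.sqrt 2 ≤ Real.sqrt (C ^ 2 - 1) := by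
    have hs2 : (Real.sqrt 2) ^ 2 = 2 := Real.sq_sqrt (by norm_num)
    have h1 : (b * (Real.sinh ri * Real.sinh rj) / Real.sqrt 2) ^ 2 ≤ C ^ 2 - 1 := by
      have h3 : (b * (Real.sinh ri * Real.sinh rj)) ^ 2 ≤ C ^ 2 :=
        pow_le_pow_left₀ (by positivity) hC1 2
      rw [div_pow, hs2]
      linarith
    calc b * (Real.sinh ri * Real.sinh rj) / Real.sqrt 2
        = Real.sqrt ((b * (Real.sinh ri * Real.sinh rj) / Real.sqrt 2) ^ 2) := by
          rw [Real.sqrt_sq (by positivity)]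
      _ ≤ Real.sqrt (C ^ 2 - 1) := Real.sqrt_le_sqrt h1
  have hD0 : 0 < Real.sqrt (C ^ 2 - 1) := lt_of_lt_of_le (by positivity) hD
  have hx : Real.sinh rj * Real.sin Θ / Real.sqrt (C ^ 2 - 1) < Real.sin ε' := by
    have hkey : Real.sqrt 2 * Real.sin Θ < b * Real.sinh ri * Real.sin ε' := by
      have h4 : Real.sqrt 2 * Real.sin Θ / (b * Real.sin ε') < Real.sinh ri :=
        lt_of_lt_of_le (lt_add_one _) (hMge2.trans hsri.le)
      rw [div_lt_iff₀ (by positivity)] at h4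
      calc Real.sqrt 2 * Real.sin Θ < Real.sinh ri * (b * Real.sin ε') := h4
        _ = b * Real.sinh ri * Real.sin ε' := by ring
    rw [div_lt_iff₀ hD0]
    have hs2pos : (0:ℝ) < Real.sqrt 2 := by positivity
    calc Real.sinh rj * Real.sin Θ
        = (Real.sqrt 2 * Real.sin Θ) * (Real.sinh rj / Real.sqrt 2) := by
          field_simp
      _ < (b * Real.sinh ri * Real.sin ε') * (Real.sinh rj / Real.sqrt 2) := by
          apply mul_lt_mul_of_pos_right hkey; positivity
      _ = Real.sin ε' * (b * (Real.sinh ri * Real.sinh rj) / Real.sqrt 2) := by ring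
      _ ≤ Real.sin ε' * Real.sqrt (C ^ 2 - 1) :=
          mul_le_mul_of_nonneg_left hD (le_of_lt hsinε')
  have harcsin : Real.arcsin (Real.sinh rj * Real.sin Θ / Real.sqrt (C ^ 2 - 1)) < ε' := by
    rw [Real.arcsin_lt_iff_lt_sin' ⟨by linarith [Real.pi_pos], hε'le⟩]
    exact hx
  have hfinal : Real.arcsin (Real.sinh rj * Real.sin Θ / Real.sqrt (C ^ 2 - 1)) < ε :=
    lt_of_lt_of_le harcsin hε'leε
  rw [hCdef] at hfinal
  exact hfinal
end

section
/- Maximum principle for parabolic inequalities on infinite graphs: Let G = (V,E) be a connected, locally finite infinite graph and let ω_{ij}(t) ≥ 0 be time-dependent edge weights on [0,T] with ∑_{j∼i} ω_{ij}(t) < C for all vertices i and t ∈ [0,T], for a uniform constant C. Let Δ_{ω(t)} f_i = ∑_{j∼i} ω_{ij}(t)(f_j − f_i). Suppose f : V × [0,T] → ℝ is bounded, differentiable in t, satisfies df/dt ≤ Δ_{ω(t)} f + g f where g ≤ C₀ for a constant C₀, and f(·,0) ≤ 0. Then f(·,t) ≤ 0 for all t ∈ [0,T]. -/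
set_option maxHeartbeats 1000000


open Finset

/-- Maximum principle for parabolic inequalities on infinite graphs. -/
theorem stmt5 {V : Type*} [Infinite V] (G : SimpleGraph V) [DecidableRel G.Adj]
    [G.LocallyFinite] (hconn : G.Connected)
    (T : ℝ) (hT : 0 < T)
    (ω : ℝ → V → V → ℝ) (hω : ∀ t ∈ Set.Icc (0:ℝ) T, ∀ i j, 0 ≤ ω t i j)
    (C : ℝ) (hC : ∀ t ∈ Set.Icc (0:ℝ) T, ∀ i : V,
      ∑ j ∈ G.neighborFinset i, ω t i j < C)
    (f f' g : V → ℝ → ℝ)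
    (hbd : ∃ M : ℝ, ∀ i t, t ∈ Set.Icc (0:ℝ) T → |f i t| ≤ M)
    (C₀ : ℝ) (hg : ∀ i : V, ∀ t ∈ Set.Icc (0:ℝ) T, g i t ≤ C₀)
    (hderiv : ∀ i : V, ∀ t ∈ Set.Icc (0:ℝ) T,
      HasDerivWithinAt (f i) (f' i t) (Set.Icc 0 T) t)
    (hineq : ∀ i : V, ∀ t ∈ Set.Icc (0:ℝ) T,
      f' i t ≤ (∑ j ∈ G.neighborFinset i, ω t i j * (f j t - f i t)) + g i t * f i t)
    (hinit : ∀ i : V, f i 0 ≤ 0) :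
    ∀ i : V, ∀ t ∈ Set.Icc (0:ℝ) T, f i t ≤ 0 := by
  intro i₀ t₀ ht₀
  by_contra hpos
  push_neg at hpos
  obtain ⟨M, hM⟩ := hbd
  have hM0 : 0 ≤ M := le_trans (abs_nonneg _) (hM i₀ t₀ ht₀)
  obtain ⟨v⟩ : Nonempty V := inferInstance
  have hCpos : 0 < C :=
    lt_of_le_of_lt (Finset.sum_nonneg fun j _ => hω 0 ⟨le_refl 0, hT.le⟩ v j)
      (hC 0 ⟨le_refl 0, hT.le⟩ v)
  set lam : ℝ := max C₀ 0 + 1 with hlamdef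
  have hlam1 : C₀ + 1 ≤ lam := by
    have := le_max_left C₀ (0:ℝ); simp only [hlamdef]; linarith
  have hlam0 : 0 < lam := by
    have := le_max_right C₀ (0:ℝ); simp only [hlamdef]; linarith
  set S : Set ℝ := {x | ∃ i, ∃ t ∈ Set.Icc (0:ℝ) T, Real.exp (-lam * t) * f i t = x}
    with hSdef
  have hSne : S.Nonempty := ⟨_, i₀, t₀, ht₀, rfl⟩
  have hSbdd : BddAbove S := by
    refine ⟨M, ?_⟩
    rintro x ⟨i, t, ht, rfl⟩
    have he1 : Real.exp (-lam * t) ≤ 1 := by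
      rw [Real.exp_le_one_iff]
      nlinarith [ht.1]
    have hfM : f i t ≤ M := le_of_abs_le (hM i t ht)
    nlinarith [Real.exp_pos (-lam * t)]
  set m : ℝ := sSup S with hmdef
  have hm0 : 0 < m := by
    have hx : Real.exp (-lam * t₀) * f i₀ t₀ ≤ m :=
      le_csSup hSbdd ⟨i₀, t₀, ht₀, rfl⟩
    nlinarith [Real.exp_pos (-lam * t₀)]
  set δ : ℝ := m / (2 * (C + 1)) with hδdef
  have hδ0 : 0 < δ := by positivity
  have hδC : δ * (C + 1) = m / 2 := by
    rw [hδdef, div_mul_eq_mul_div, div_eq_div_iff (ne_of_gt (by linarith)) (by norm_num)]; ring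
  have hδhalf : δ ≤ m / 2 := by nlinarith
  -- pick a near-maximizer
  obtain ⟨x, ⟨i₁, ts, hts, rfl⟩, hxgt⟩ :=
    exists_lt_of_lt_csSup hSne (show m - δ < m by linarith)
  set F : ℝ → ℝ := fun t => Real.exp (-lam * t) * f i₁ t with hFdef
  have hFd : ∀ t ∈ Set.Icc (0:ℝ) T,
      HasDerivWithinAt F
        (Real.exp (-lam * t) * (-lam * 1) * f i₁ t + Real.exp (-lam * t) * f' i₁ t)
        (Set.Icc 0 T) t := by
    intro t ht
    exact (((hasDerivAt_id t).const_mul (-lam)).exp.hasDerivWithinAt).mul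
      (hderiv i₁ t ht)
  have hFcont : ContinuousOn F (Set.Icc 0 T) :=
    fun t ht => (hFd t ht).continuousWithinAt
  have hF0 : F 0 ≤ 0 := by
    have : F 0 = f i₁ 0 := by simp [hFdef]
    rw [this]; exact hinit i₁
  set A : Set ℝ := Set.Icc 0 ts ∩ F ⁻¹' Set.Iic (m - δ) with hAdef
  have hA0 : (0:ℝ) ∈ A := ⟨⟨le_refl 0, hts.1⟩, by simp only [Set.mem_preimage, Set.mem_Iic]; linarith⟩
  have hAne : A.Nonempty := ⟨0, hA0⟩
  have hAbdd : BddAbove A := ⟨ts, fun t ht => ht.1.2⟩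
  have hAclosed : IsClosed A := by
    refine ContinuousOn.preimage_isClosed_of_isClosed ?_ isClosed_Icc isClosed_Iic
    exact hFcont.mono (Set.Icc_subset_Icc le_rfl hts.2)
  set t₁ : ℝ := sSup A with ht₁def
  have ht₁A : t₁ ∈ A := hAclosed.csSup_mem hAne hAbdd
  have ht₁0 : 0 ≤ t₁ := ht₁A.1.1
  have ht₁ts : t₁ ≤ ts := ht₁A.1.2
  have hFt₁ : F t₁ ≤ m - δ := ht₁A.2
  have ht₁lt : t₁ < ts := by
    rcases lt_or_eq_of_le ht₁ts with h | h
    · exact h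
    · exfalso; rw [h] at hFt₁; exact absurd hxgt (not_lt.mpr hFt₁)
  have hgtF : ∀ t, t₁ < t → t ≤ ts → m - δ < F t := by
    intro t h1 h2
    by_contra h
    push_neg at h
    have hmem : t ∈ A := ⟨⟨le_trans ht₁0 h1.le, h2⟩, h⟩
    exact absurd (le_csSup hAbdd hmem) (not_le.mpr h1)
  -- derivative is negative on (t₁, ts)
  have hanti : StrictAntiOn F (Set.Icc t₁ ts) := by
    apply strictAntiOn_of_deriv_neg (convex_Icc t₁ ts)
    · exact hFcont.mono (Set.Icc_subset_Icc ht₁0 hts.2)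
    · intro t ht
      rw [interior_Icc] at ht
      have h0t : 0 < t := lt_of_le_of_lt ht₁0 ht.1
      have htT : t < T := lt_of_lt_of_le ht.2 hts.2
      have htI : t ∈ Set.Icc (0:ℝ) T := ⟨h0t.le, htT.le⟩
      have hD : HasDerivAt F
          (Real.exp (-lam * t) * (-lam * 1) * f i₁ t + Real.exp (-lam * t) * f' i₁ t) t :=
        (hFd t htI).hasDerivAt (Icc_mem_nhds h0t htT)
      rw [hD.deriv]
      -- estimates
      set e : ℝ := Real.exp (-lam * t) with hedef
      have he0 : 0 < e := Real.exp_pos _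
      have hFt : m - δ < e * f i₁ t := hgtF t ht.1 ht.2.le
      have hft : 0 < f i₁ t := by nlinarith
      have hsum : e * (∑ j ∈ G.neighborFinset i₁, ω t i₁ j * (f j t - f i₁ t)) ≤ C * δ := by
        rw [Finset.mul_sum]
        have hterm : ∀ j ∈ G.neighborFinset i₁,
            e * (ω t i₁ j * (f j t - f i₁ t)) ≤ ω t i₁ j * δ := by
          intro j _
          have hfj : e * f j t ≤ m := le_csSup hSbdd ⟨j, t, htI, rfl⟩
          have hωj := hω t htI i₁ j
          have hkey : e * (f j t - f i₁ t) ≤ δ := by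
            have : e * (f j t - f i₁ t) = e * f j t - e * f i₁ t := by ring
            rw [this]; linarith
          calc e * (ω t i₁ j * (f j t - f i₁ t))
              = ω t i₁ j * (e * (f j t - f i₁ t)) := by ring
            _ ≤ ω t i₁ j * δ := mul_le_mul_of_nonneg_left hkey hωj
        calc ∑ j ∈ G.neighborFinset i₁, e * (ω t i₁ j * (f j t - f i₁ t))
            ≤ ∑ j ∈ G.neighborFinset i₁, ω t i₁ j * δ := Finset.sum_le_sum hterm
          _ = (∑ j ∈ G.neighborFinset i₁, ω t i₁ j) * δ := by rw [Finset.sum_mul]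
          _ ≤ C * δ := mul_le_mul_of_nonneg_right (hC t htI i₁).le hδ0.le
      have hf'le := hineq i₁ t htI
      have h1 : e * f' i₁ t ≤ C * δ + g i₁ t * (e * f i₁ t) := by
        have h2 := mul_le_mul_of_nonneg_left hf'le he0.le
        rw [mul_add] at h2
        have : e * (g i₁ t * f i₁ t) = g i₁ t * (e * f i₁ t) := by ring
        rw [this] at h2
        linarith
      have hgC : g i₁ t * (e * f i₁ t) ≤ C₀ * (e * f i₁ t) :=
        mul_le_mul_of_nonneg_right (hg i₁ t htI) (by positivity)
      have hlamF : C₀ * (e * f i₁ t) - lam * (e * f i₁ t) ≤ -(m - δ) := by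
        have h3 : C₀ - lam ≤ -1 := by linarith
        have h4 : (C₀ - lam) * (e * f i₁ t) ≤ (-1) * (e * f i₁ t) := by
          apply mul_le_mul_of_nonneg_right h3
          linarith
        have h5 : (C₀ - lam) * (e * f i₁ t) = C₀ * (e * f i₁ t) - lam * (e * f i₁ t) := by
          ring
        linarith
      have hrw : e * (-lam * 1) * f i₁ t = -(lam * (e * f i₁ t)) := by ring
      have hq1 : δ * (C + 1) = C * δ + δ := by ring
      rw [hrw]
      linarith
  have hcontra : F ts < F t₁ :=
    hanti ⟨le_refl t₁, ht₁ts⟩ ⟨ht₁ts, le_refl ts⟩ ht₁lt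
  have hFts : F ts = Real.exp (-lam * ts) * f i₁ ts := rfl
  linarith
end

section
/- Comparison corollary on infinite graphs: under the hypotheses of the graph maximum principle (nonnegative weights with uniformly bounded vertex sums, bounded solution f), if f solves df/dt = Δ_{ω(t)} f + g f with g ≤ 0 and C₁ ≤ f_i(0) ≤ C₂ for all i ∈ V (with C₁ < 0 < C₂), then C₁ ≤ f_i(t) ≤ C₂ for all i ∈ V and t ∈ [0,T]. -/
open Finset

/-- Auxiliary upper-bound maximum principle. -/
lemma graph_max_upper {V : Type*} [Nonempty V] (G : SimpleGraph V) [DecidableRel G.Adj]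
    [G.LocallyFinite]
    (T : ℝ) (hT : 0 < T)
    (ω : ℝ → V → V → ℝ) (hω : ∀ t ∈ Set.Icc (0:ℝ) T, ∀ i j, 0 ≤ ω t i j)
    (C : ℝ) (hC : ∀ t ∈ Set.Icc (0:ℝ) T, ∀ i : V,
      ∑ j ∈ G.neighborFinset i, ω t i j < C)
    (f g : V → ℝ → ℝ)
    (hbd : ∃ M : ℝ, ∀ i t, t ∈ Set.Icc (0:ℝ) T → |f i t| ≤ M)
    (hg : ∀ i : V, ∀ t ∈ Set.Icc (0:ℝ) T, g i t ≤ 0)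
    (heq : ∀ i : V, ∀ t ∈ Set.Icc (0:ℝ) T,
      HasDerivWithinAt (f i)
        ((∑ j ∈ G.neighborFinset i, ω t i j * (f j t - f i t)) + g i t * f i t)
        (Set.Icc 0 T) t)
    (C₂ : ℝ) (hC₂ : 0 < C₂) (hinit : ∀ i : V, f i 0 ≤ C₂) :
    ∀ i : V, ∀ t ∈ Set.Icc (0:ℝ) T, f i t ≤ C₂ := by
  obtain ⟨M, hM⟩ := hbd
  have h0T : (0:ℝ) ∈ Set.Icc (0:ℝ) T := ⟨le_refl _, hT.le⟩
  have hCpos : 0 < C :=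
    lt_of_le_of_lt (Finset.sum_nonneg fun j _ => hω 0 h0T _ j)
      (hC 0 h0T (Classical.arbitrary V))
  obtain ⟨F, hFeq⟩ : ∃ F : V → ℝ → ℝ,
      ∀ i t, F i t = Real.exp (-(2*C)*t) * (f i t - C₂) := ⟨_, fun _ _ => rfl⟩
  have hexp_pos : ∀ t : ℝ, 0 < Real.exp (-(2*C)*t) := fun t => Real.exp_pos _
  have hFbd : ∀ i, ∀ t ∈ Set.Icc (0:ℝ) T, F i t ≤ |M| := by
    intro i t ht
    rw [hFeq]
    rcases le_or_gt (f i t) C₂ with h | h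
    · have : Real.exp (-(2*C)*t) * (f i t - C₂) ≤ 0 :=
        mul_nonpos_of_nonneg_of_nonpos (hexp_pos t).le (by linarith)
      exact this.trans (abs_nonneg M)
    · have hexple : Real.exp (-(2*C)*t) ≤ 1 := by
        rw [Real.exp_le_one_iff]; nlinarith [ht.1]
      have h1 : Real.exp (-(2*C)*t) * (f i t - C₂) ≤ f i t - C₂ := by
        nlinarith [hexp_pos t]
      have h2 := hM i t ht
      have h3 := le_abs_self (f i t)
      have h4 := le_abs_self M
      linarith
  obtain ⟨A, hAdef⟩ : ∃ A : Set ℝ,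
      A = {x | ∃ i : V, ∃ t ∈ Set.Icc (0:ℝ) T, F i t = x} := ⟨_, rfl⟩
  have hmemA : ∀ i, ∀ t ∈ Set.Icc (0:ℝ) T, F i t ∈ A := by
    intro i t ht; rw [hAdef]; exact ⟨i, t, ht, rfl⟩
  have hAne : A.Nonempty := ⟨F (Classical.arbitrary V) 0, hmemA _ 0 h0T⟩
  have hAbdd : BddAbove A := ⟨|M|, by
    rw [hAdef]; rintro x ⟨i, t, ht, rfl⟩; exact hFbd i t ht⟩
  obtain ⟨S, hSdef⟩ : ∃ S : ℝ, S = sSup A := ⟨_, rfl⟩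
  have hmemS : ∀ i, ∀ t ∈ Set.Icc (0:ℝ) T, F i t ≤ S :=
    fun i t ht => hSdef ▸ le_csSup hAbdd (hmemA i t ht)
  suffices hS : S ≤ 0 by
    intro i t ht
    have h1 : F i t ≤ 0 := (hmemS i t ht).trans hS
    rw [hFeq] at h1
    nlinarith [hexp_pos t]
  by_contra hS
  push_neg at hS
  obtain ⟨ε, hεdef⟩ : ∃ ε : ℝ, ε = S / (3 * (1 + T)) := ⟨_, rfl⟩
  have hεpos : 0 < ε := hεdef ▸ div_pos hS (by nlinarith)
  have hkey : ε + ε * T = S / 3 := by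
    rw [hεdef]; field_simp
  have hlt : S - ε < sSup A := by rw [← hSdef]; linarith
  obtain ⟨x, hxA, hx⟩ := exists_lt_of_lt_csSup hAne hlt
  rw [hAdef] at hxA
  obtain ⟨i₀, t₀, ht₀, rfl⟩ := hxA
  have hFderiv : ∀ i, ∀ t ∈ Set.Icc (0:ℝ) T, HasDerivWithinAt (F i)
      (-(2*C) * F i t + Real.exp (-(2*C)*t) *
        ((∑ j ∈ G.neighborFinset i, ω t i j * (f j t - f i t)) + g i t * f i t))
      (Set.Icc 0 T) t := by
    intro i t ht
    have h1 : HasDerivAt (fun s : ℝ => Real.exp (-(2*C)*s))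
        (Real.exp (-(2*C)*t) * (-(2*C))) t := by
      simpa using (((hasDerivAt_id t).const_mul (-(2*C))).exp)
    have h2 := (h1.hasDerivWithinAt).mul ((heq i t ht).sub_const C₂)
    have hfun : F i = fun s => Real.exp (-(2*C)*s) * (f i s - C₂) := funext (hFeq i)
    rw [hfun]
    refine h2.congr_deriv ?_
    ring
  obtain ⟨φ, hφeq⟩ : ∃ φ : ℝ → ℝ, ∀ t, φ t = F i₀ t - ε * t := ⟨_, fun _ => rfl⟩
  have hφderiv : ∀ t ∈ Set.Icc (0:ℝ) T, HasDerivWithinAt φ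
      (-(2*C) * F i₀ t + Real.exp (-(2*C)*t) *
        ((∑ j ∈ G.neighborFinset i₀, ω t i₀ j * (f j t - f i₀ t)) + g i₀ t * f i₀ t) - ε)
      (Set.Icc 0 T) t := by
    intro t ht
    have h3 : HasDerivWithinAt (fun s : ℝ => ε * s) ε (Set.Icc 0 T) t := by
      simpa using ((hasDerivAt_id t).const_mul ε).hasDerivWithinAt
    have hfun : φ = fun s => F i₀ s - ε * s := funext hφeq
    rw [hfun]
    exact (hFderiv i₀ t ht).sub h3
  have hφcont : ContinuousOn φ (Set.Icc (0:ℝ) T) :=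
    fun t ht => (hφderiv t ht).continuousWithinAt
  obtain ⟨t₁, ht₁, hmax⟩ := isCompact_Icc.exists_isMaxOn ⟨0, h0T⟩ hφcont
  have hφt₁ : 2*S/3 < φ t₁ := by
    have h1 : φ t₀ ≤ φ t₁ := hmax ht₀
    have h2 : S - ε - ε * T < φ t₀ := by
      rw [hφeq]
      nlinarith [ht₀.1, ht₀.2, hεpos, hx]
    linarith
  have hFt₁ : 2*S/3 < F i₀ t₁ := by
    have h5 : φ t₁ ≤ F i₀ t₁ := by
      rw [hφeq]; nlinarith [ht₁.1, hεpos]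
    linarith
  have ht₁pos : 0 < t₁ := by
    rcases eq_or_lt_of_le ht₁.1 with h | h
    · exfalso
      have hφ0 : φ 0 ≤ 0 := by
        rw [hφeq, hFeq]
        simp only [mul_zero, neg_zero, Real.exp_zero, one_mul]
        have := hinit i₀; linarith
      rw [← h] at hφt₁
      linarith
    · exact h
  have hcone : -t₁ ∈ posTangentConeAt (Set.Icc (0:ℝ) T) t₁ := by
    have hseg : segment ℝ t₁ 0 ⊆ Set.Icc (0:ℝ) T := by
      rw [segment_symm, segment_eq_Icc ht₁.1]
      exact Set.Icc_subset_Icc le_rfl ht₁.2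
    have := sub_mem_posTangentConeAt_of_segment_subset hseg
    simpa using this
  have hlocmax : IsLocalMaxOn φ (Set.Icc (0:ℝ) T) t₁ :=
    hmax.filter_mono (Filter.le_principal_iff.2 self_mem_nhdsWithin)
  have hnonpos := hlocmax.hasFDerivWithinAt_nonpos
    ((hφderiv t₁ ht₁).hasFDerivWithinAt) hcone
  simp only [ContinuousLinearMap.smulRight_apply, ContinuousLinearMap.one_apply, ContinuousLinearMap.toSpanSingleton_apply,
    smul_eq_mul] at hnonpos
  have hd : ε ≤ -(2*C) * F i₀ t₁ + Real.exp (-(2*C)*t₁) *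
      ((∑ j ∈ G.neighborFinset i₀, ω t₁ i₀ j * (f j t₁ - f i₀ t₁)) + g i₀ t₁ * f i₀ t₁) := by
    nlinarith [ht₁pos, hnonpos]
  have hsum : Real.exp (-(2*C)*t₁) *
      (∑ j ∈ G.neighborFinset i₀, ω t₁ i₀ j * (f j t₁ - f i₀ t₁)) ≤ C * (S/3) := by
    have heq2 : Real.exp (-(2*C)*t₁) *
        (∑ j ∈ G.neighborFinset i₀, ω t₁ i₀ j * (f j t₁ - f i₀ t₁))
        = ∑ j ∈ G.neighborFinset i₀, ω t₁ i₀ j * (F j t₁ - F i₀ t₁) := by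
      rw [Finset.mul_sum]
      refine Finset.sum_congr rfl fun j _ => ?_
      rw [hFeq, hFeq]; ring
    rw [heq2]
    calc ∑ j ∈ G.neighborFinset i₀, ω t₁ i₀ j * (F j t₁ - F i₀ t₁)
        ≤ ∑ j ∈ G.neighborFinset i₀, ω t₁ i₀ j * (S/3) := by
          refine Finset.sum_le_sum fun j _ => ?_
          refine mul_le_mul_of_nonneg_left ?_ (hω t₁ ht₁ i₀ j)
          have := hmemS j t₁ ht₁
          linarith
      _ = (∑ j ∈ G.neighborFinset i₀, ω t₁ i₀ j) * (S/3) := by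
          rw [← Finset.sum_mul]
      _ ≤ C * (S/3) := mul_le_mul_of_nonneg_right (hC t₁ ht₁ i₀).le (by linarith)
  have hfpos : 0 < f i₀ t₁ := by
    have h1 : 0 < F i₀ t₁ := by linarith
    rw [hFeq] at h1
    nlinarith [hexp_pos t₁]
  have hgf : Real.exp (-(2*C)*t₁) * (g i₀ t₁ * f i₀ t₁) ≤ 0 :=
    mul_nonpos_of_nonneg_of_nonpos (hexp_pos t₁).le
      (mul_nonpos_of_nonpos_of_nonneg (hg i₀ t₁ ht₁) hfpos.le)
  have hfin : ε ≤ -(2*C) * (2*S/3) + C * (S/3) := by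
    have hmul : Real.exp (-(2*C)*t₁) *
        ((∑ j ∈ G.neighborFinset i₀, ω t₁ i₀ j * (f j t₁ - f i₀ t₁)) + g i₀ t₁ * f i₀ t₁)
        = Real.exp (-(2*C)*t₁) *
          (∑ j ∈ G.neighborFinset i₀, ω t₁ i₀ j * (f j t₁ - f i₀ t₁))
        + Real.exp (-(2*C)*t₁) * (g i₀ t₁ * f i₀ t₁) := by ring
    rw [hmul] at hd
    nlinarith [hFt₁, hCpos, hsum, hgf]
  nlinarith [hεpos, hCpos, hS, hfin]

/-- Comparison corollary on infinite graphs: solutions of the weighted graph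
heat equation with nonpositive potential stay between the initial bounds. -/
theorem stmt6 {V : Type*} [Infinite V] (G : SimpleGraph V) [DecidableRel G.Adj]
    [G.LocallyFinite]
    (T : ℝ) (hT : 0 < T)
    (ω : ℝ → V → V → ℝ) (hω : ∀ t ∈ Set.Icc (0:ℝ) T, ∀ i j, 0 ≤ ω t i j)
    (C : ℝ) (hC : ∀ t ∈ Set.Icc (0:ℝ) T, ∀ i : V,
      ∑ j ∈ G.neighborFinset i, ω t i j < C)
    (f g : V → ℝ → ℝ)
    (hbd : ∃ M : ℝ, ∀ i t, t ∈ Set.Icc (0:ℝ) T → |f i t| ≤ M)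
    (hg : ∀ i : V, ∀ t ∈ Set.Icc (0:ℝ) T, g i t ≤ 0)
    (heq : ∀ i : V, ∀ t ∈ Set.Icc (0:ℝ) T,
      HasDerivWithinAt (f i)
        ((∑ j ∈ G.neighborFinset i, ω t i j * (f j t - f i t)) + g i t * f i t)
        (Set.Icc 0 T) t)
    (C₁ C₂ : ℝ) (hC₁ : C₁ < 0) (hC₂ : 0 < C₂)
    (hinit : ∀ i : V, C₁ ≤ f i 0 ∧ f i 0 ≤ C₂) :
    ∀ i : V, ∀ t ∈ Set.Icc (0:ℝ) T, C₁ ≤ f i t ∧ f i t ≤ C₂ := by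
  obtain ⟨M, hM⟩ := hbd
  have hupper := graph_max_upper G T hT ω hω C hC f g ⟨M, hM⟩ hg heq C₂ hC₂
    fun i => (hinit i).2
  have hneq : ∀ i : V, ∀ t ∈ Set.Icc (0:ℝ) T,
      HasDerivWithinAt (fun s => -f i s)
        ((∑ j ∈ G.neighborFinset i, ω t i j * ((-f j t) - (-f i t))) + g i t * (-f i t))
        (Set.Icc 0 T) t := by
    intro i t ht
    have h2 : (∑ j ∈ G.neighborFinset i, ω t i j * ((-f j t) - (-f i t))) + g i t * (-f i t)
        = -((∑ j ∈ G.neighborFinset i, ω t i j * (f j t - f i t)) + g i t * f i t) := by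
      rw [neg_add, ← Finset.sum_neg_distrib]
      congr 1
      · exact Finset.sum_congr rfl fun j _ => by ring
      · ring
    rw [h2]
    exact (heq i t ht).neg
  have hlower := graph_max_upper G T hT ω hω C hC (fun i s => -f i s) g
    ⟨M, fun i t ht => by simpa using hM i t ht⟩ hg hneq (-C₁) (by linarith)
    (fun i => by simpa using (hinit i).1)
  intro i t ht
  refine ⟨?_, hupper i t ht⟩
  have := hlower i t ht
  simpa using neg_le_neg this
end

section
/- Uniqueness corollary on infinite graphs: if f is a bounded solution on V × [0,T] of df/dt = Δ_{ω(t)} f + g f with f(·,0) = 0, nonnegative weights ω_{ij}(t) with uniformly bounded vertex sums, and g bounded above, then f ≡ 0 on V × [0,T]. -/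
open Finset

set_option maxHeartbeats 1600000 in
lemma aux7 {V : Type*} [Infinite V] (G : SimpleGraph V) [DecidableRel G.Adj]
    [G.LocallyFinite]
    (T : ℝ) (hT : 0 < T)
    (ω : ℝ → V → V → ℝ) (hω : ∀ t ∈ Set.Icc (0:ℝ) T, ∀ i j, 0 ≤ ω t i j)
    (C : ℝ) (hC : ∀ t ∈ Set.Icc (0:ℝ) T, ∀ i : V,
      ∑ j ∈ G.neighborFinset i, ω t i j < C)
    (f g : V → ℝ → ℝ)
    (hbd : ∃ M : ℝ, ∀ i t, t ∈ Set.Icc (0:ℝ) T → |f i t| ≤ M)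
    (C₀ : ℝ) (hg : ∀ i : V, ∀ t ∈ Set.Icc (0:ℝ) T, g i t ≤ C₀)
    (heq : ∀ i : V, ∀ t ∈ Set.Icc (0:ℝ) T,
      HasDerivWithinAt (f i)
        ((∑ j ∈ G.neighborFinset i, ω t i j * (f j t - f i t)) + g i t * f i t)
        (Set.Icc 0 T) t)
    (hinit : ∀ i : V, f i 0 = 0) :
    ∀ i : V, ∀ t ∈ Set.Icc (0:ℝ) T, f i t ≤ 0 := by
  obtain ⟨M, hM⟩ := hbd
  obtain ⟨i₀⟩ : Nonempty V := inferInstance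
  have h0T : (0:ℝ) ∈ Set.Icc (0:ℝ) T := ⟨le_refl _, hT.le⟩
  have hCpos : 0 < C :=
    lt_of_le_of_lt (Finset.sum_nonneg fun j _ => hω 0 h0T i₀ j) (hC 0 h0T i₀)
  set φ : V → ℝ → ℝ := fun i t => f i t * Real.exp (-(C₀ * t)) with hφdef
  set Sset : Set ℝ := {x | ∃ i, ∃ t ∈ Set.Icc (0:ℝ) T, φ i t = x} with hSset
  have hne : Sset.Nonempty := ⟨φ i₀ 0, i₀, 0, h0T, rfl⟩
  have hbdd : BddAbove Sset := by
    refine ⟨M * Real.exp (|C₀| * T), ?_⟩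
    rintro x ⟨i, t, ht, rfl⟩
    have h1 : |f i t| ≤ M := hM i t ht
    have h2 : Real.exp (-(C₀ * t)) ≤ Real.exp (|C₀| * T) := by
      apply Real.exp_le_exp.2
      calc -(C₀ * t) ≤ |C₀ * t| := neg_le_abs _
        _ = |C₀| * |t| := abs_mul _ _
        _ ≤ |C₀| * T := by
            apply mul_le_mul_of_nonneg_left _ (abs_nonneg _)
            rw [abs_of_nonneg ht.1]; exact ht.2
    calc φ i t ≤ |f i t| * Real.exp (-(C₀ * t)) :=
          mul_le_mul_of_nonneg_right (le_abs_self _) (Real.exp_pos _).le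
      _ ≤ M * Real.exp (|C₀| * T) :=
          mul_le_mul h1 h2 (Real.exp_pos _).le ((abs_nonneg _).trans h1)
  set S := sSup Sset with hS
  have hSle : ∀ i, ∀ t ∈ Set.Icc (0:ℝ) T, φ i t ≤ S :=
    fun i t ht => le_csSup hbdd ⟨i, t, ht, rfl⟩
  by_contra hcon
  push_neg at hcon
  obtain ⟨i₁, t₁, ht₁, hpos⟩ := hcon
  have hφpos : 0 < φ i₁ t₁ := mul_pos hpos (Real.exp_pos _)
  have hSpos : 0 < S := lt_of_lt_of_le hφpos (hSle i₁ t₁ ht₁)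
  have key : ∀ i, ∀ t ∈ Set.Icc (0:ℝ) T, S * Real.exp (-(C * t)) ≤ S - φ i t := by
    intro i t ht
    set θ : ℝ → ℝ := fun s => (S - φ i s) * Real.exp (C * s) with hθ
    have hθcont : ContinuousOn θ (Set.Icc 0 T) := by
      apply ContinuousOn.mul
      · apply ContinuousOn.sub continuousOn_const
        exact ContinuousOn.mul (fun s hs => (heq i s hs).continuousWithinAt)
          (Real.continuous_exp.comp (by continuity)).continuousOn
      · exact (Real.continuous_exp.comp (by continuity)).continuousOn
    suffices hkey : S ≤ θ t by
      calc S * Real.exp (-(C * t))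
          ≤ ((S - φ i t) * Real.exp (C * t)) * Real.exp (-(C * t)) :=
            mul_le_mul_of_nonneg_right hkey (Real.exp_pos _).le
        _ = S - φ i t := by
            rw [mul_assoc, ← Real.exp_add, add_neg_cancel, Real.exp_zero, mul_one]
    by_contra hlt
    push_neg at hlt
    set K : Set ℝ := Set.Icc 0 t ∩ θ ⁻¹' Set.Ici S with hK
    have hKne : K.Nonempty := by
      refine ⟨0, ⟨le_refl _, ht.1⟩, ?_⟩
      show S ≤ θ 0
      have : θ 0 = S := by simp [hθ, hφdef, hinit i]
      linarith
    have hKbdd : BddAbove K := ⟨t, fun s hs => hs.1.2⟩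
    have hKclosed : IsClosed K :=
      (hθcont.mono (Set.Icc_subset_Icc le_rfl ht.2)).preimage_isClosed_of_isClosed
        isClosed_Icc isClosed_Ici
    set t₀ := sSup K with ht₀def
    have ht₀K : t₀ ∈ K := hKclosed.csSup_mem hKne hKbdd
    have ht₀t : t₀ ≤ t := ht₀K.1.2
    have ht₀0 : 0 ≤ t₀ := ht₀K.1.1
    have ht₀lt : t₀ < t := by
      rcases lt_or_eq_of_le ht₀t with h | h
      · exact h
      · exact absurd (h ▸ ht₀K.2) (not_le.2 hlt)
    have hlt' : ∀ s, t₀ < s → s ≤ t → θ s < S := by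
      intro s hs1 hs2
      by_contra hc
      push_neg at hc
      have : s ∈ K := ⟨⟨ht₀0.trans hs1.le, hs2⟩, hc⟩
      exact absurd (le_csSup hKbdd this) (not_le.2 hs1)
    have hder : ∀ s ∈ Set.Ioo t₀ t, HasDerivAt θ
        ((0 - (((∑ j ∈ G.neighborFinset i, ω s i j * (f j s - f i s)) + g i s * f i s)
            * Real.exp (-(C₀ * s)) + f i s * (Real.exp (-(C₀ * s)) * (-(C₀ * 1)))))
          * Real.exp (C * s) + (S - φ i s) * (Real.exp (C * s) * (C * 1))) s := by
      intro s hs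
      have hsIcc : s ∈ Set.Icc (0:ℝ) T := ⟨ht₀0.trans hs.1.le, hs.2.le.trans ht.2⟩
      have hmem : Set.Icc (0:ℝ) T ∈ nhds s :=
        Icc_mem_nhds (lt_of_le_of_lt ht₀0 hs.1) (lt_of_lt_of_le hs.2 ht.2)
      have hf' := (heq i s hsIcc).hasDerivAt hmem
      have he : HasDerivAt (fun u => Real.exp (-(C₀ * u)))
          (Real.exp (-(C₀ * s)) * (-(C₀ * 1))) s :=
        (((hasDerivAt_id s).const_mul C₀).neg).exp
      have hE : HasDerivAt (fun u => Real.exp (C * u)) (Real.exp (C * s) * (C * 1)) s :=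
        ((hasDerivAt_id s).const_mul C).exp
      exact ((hasDerivAt_const s S).sub (hf'.mul he)).mul hE
    have hmono : MonotoneOn θ (Set.Icc t₀ t) := by
      apply monotoneOn_of_deriv_nonneg (convex_Icc _ _)
        (hθcont.mono (Set.Icc_subset_Icc ht₀0 ht.2))
      · rw [interior_Icc]
        exact fun s hs => ((hder s hs).differentiableAt).differentiableWithinAt
      · rw [interior_Icc]
        intro s hs
        rw [(hder s hs).deriv]
        have hsIcc : s ∈ Set.Icc (0:ℝ) T := ⟨ht₀0.trans hs.1.le, hs.2.le.trans ht.2⟩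
        have hφle : φ i s ≤ S := hSle i s hsIcc
        have hφpos' : 0 < φ i s := by
          have h1 : θ s < S := hlt' s hs.1 hs.2.le
          have h2 : (1:ℝ) ≤ Real.exp (C * s) :=
            Real.one_le_exp (mul_nonneg hCpos.le (ht₀0.trans hs.1.le))
          have h3 : (S - φ i s) * 1 ≤ (S - φ i s) * Real.exp (C * s) :=
            mul_le_mul_of_nonneg_left h2 (by linarith)
          simp only [hθ] at h1
          nlinarith
        have hsum : (∑ j ∈ G.neighborFinset i, ω s i j * (f j s - f i s))
            * Real.exp (-(C₀ * s)) ≤ C * (S - φ i s) := by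
          rw [Finset.sum_mul]
          calc ∑ j ∈ G.neighborFinset i, ω s i j * (f j s - f i s) * Real.exp (-(C₀ * s))
              ≤ ∑ j ∈ G.neighborFinset i, ω s i j * (S - φ i s) := by
                apply Finset.sum_le_sum
                intro j hj
                have h1 : f j s * Real.exp (-(C₀ * s)) ≤ S := hSle j s hsIcc
                have h2 : 0 ≤ ω s i j := hω s hsIcc i j
                have h3 : ω s i j * (f j s - f i s) * Real.exp (-(C₀ * s))
                    = ω s i j * (f j s * Real.exp (-(C₀ * s)) - φ i s) := by
                  simp only [hφdef]; ring
                rw [h3]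
                exact mul_le_mul_of_nonneg_left (by linarith) h2
            _ = (∑ j ∈ G.neighborFinset i, ω s i j) * (S - φ i s) :=
                (Finset.sum_mul _ _ _).symm
            _ ≤ C * (S - φ i s) :=
                mul_le_mul_of_nonneg_right (hC s hsIcc i).le (by linarith)
        have hgφ : g i s * (f i s * Real.exp (-(C₀ * s)))
            ≤ C₀ * (f i s * Real.exp (-(C₀ * s))) :=
          mul_le_mul_of_nonneg_right (hg i s hsIcc) (le_of_lt hφpos')
        have hrw : (0 - (((∑ j ∈ G.neighborFinset i, ω s i j * (f j s - f i s)) + g i s * f i s)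
            * Real.exp (-(C₀ * s)) + f i s * (Real.exp (-(C₀ * s)) * (-(C₀ * 1)))))
          * Real.exp (C * s) + (S - φ i s) * (Real.exp (C * s) * (C * 1))
            = Real.exp (C * s) * (C * (S - φ i s)
              - (∑ j ∈ G.neighborFinset i, ω s i j * (f j s - f i s)) * Real.exp (-(C₀ * s))
              - g i s * (f i s * Real.exp (-(C₀ * s)))
              + C₀ * (f i s * Real.exp (-(C₀ * s)))) := by
          simp only [hφdef]; ring
        rw [hrw]
        apply mul_nonneg (Real.exp_pos _).le
        linarith
    have h1 : θ t₀ ≤ θ t :=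
      hmono ⟨le_refl _, ht₀t⟩ ⟨ht₀t, le_refl _⟩ ht₀t
    have h2 : S ≤ θ t₀ := ht₀K.2
    linarith
  have hfinal : S ≤ S - S * Real.exp (-(C * T)) := by
    apply csSup_le hne
    rintro x ⟨i, t, ht, rfl⟩
    have h1 := key i t ht
    have h2 : Real.exp (-(C * T)) ≤ Real.exp (-(C * t)) := by
      apply Real.exp_le_exp.2
      nlinarith [ht.2, hCpos]
    nlinarith
  nlinarith [Real.exp_pos (-(C * T))]

open Finset

set_option maxHeartbeats 1600000 in
/-- Uniqueness corollary on infinite graphs: a bounded solution of the weighted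
graph heat equation with zero initial data vanishes identically. -/
theorem stmt7 {V : Type*} [Infinite V] (G : SimpleGraph V) [DecidableRel G.Adj]
    [G.LocallyFinite]
    (T : ℝ) (hT : 0 < T)
    (ω : ℝ → V → V → ℝ) (hω : ∀ t ∈ Set.Icc (0:ℝ) T, ∀ i j, 0 ≤ ω t i j)
    (C : ℝ) (hC : ∀ t ∈ Set.Icc (0:ℝ) T, ∀ i : V,
      ∑ j ∈ G.neighborFinset i, ω t i j < C)
    (f g : V → ℝ → ℝ)
    (hbd : ∃ M : ℝ, ∀ i t, t ∈ Set.Icc (0:ℝ) T → |f i t| ≤ M)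
    (C₀ : ℝ) (hg : ∀ i : V, ∀ t ∈ Set.Icc (0:ℝ) T, g i t ≤ C₀)
    (heq : ∀ i : V, ∀ t ∈ Set.Icc (0:ℝ) T,
      HasDerivWithinAt (f i)
        ((∑ j ∈ G.neighborFinset i, ω t i j * (f j t - f i t)) + g i t * f i t)
        (Set.Icc 0 T) t)
    (hinit : ∀ i : V, f i 0 = 0) :
    ∀ i : V, ∀ t ∈ Set.Icc (0:ℝ) T, f i t = 0 := by
  intro i t ht
  have h1 := aux7 G T hT ω hω C hC f g ⟨hbd.choose, hbd.choose_spec⟩ C₀ hg heq hinit i t ht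
  have h2 := aux7 G T hT ω hω C hC (fun i t => -(f i t)) g
    ⟨hbd.choose, fun i t ht => by simpa using hbd.choose_spec i t ht⟩ C₀ hg
    (fun i t ht => by
      have hneg := (heq i t ht).neg
      have hval : -((∑ j ∈ G.neighborFinset i, ω t i j * (f j t - f i t)) + g i t * f i t)
          = (∑ j ∈ G.neighborFinset i, ω t i j * (-(f j t) - -(f i t))) + g i t * (-(f i t)) := by
        rw [neg_add, ← Finset.sum_neg_distrib]
        congr 1
        · exact Finset.sum_congr rfl fun j _ => by ring
        · ring
      rw [hval] at hneg
      exact hneg)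
    (fun i => by simp [hinit i]) i t ht
  simp only [neg_nonpos] at h2
  linarith
end

section
/- On ℤ², for u ∈ l²(ℤ²), ‖Δu‖_{l²} = (1/2) N_{2,2}(u), where Δ is the unit-weight graph Laplacian and N_{2,2}²(u) = ∑_{i,j=1}^{4} ‖D_i D_j u‖_{l²}². -/
/-- The four lattice directions on ℤ². -/
def latDir : Fin 4 → ℤ × ℤ := ![(1, 0), (0, 1), (-1, 0), (0, -1)]

/-- The basic difference operators D₁,…,D₄ on ℤ². -/
def Dop (i : Fin 4) (u : ℤ × ℤ → ℝ) (p : ℤ × ℤ) : ℝ := u (p + latDir i) - u p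

/-- The unit-weight graph Laplacian on ℤ². -/
def latLap (u : ℤ × ℤ → ℝ) (p : ℤ × ℤ) : ℝ := ∑ i : Fin 4, Dop i u p

/-- The squared second-order seminorm N_{2,2}²(u) = ∑_{i,j} ‖D_i D_j u‖². -/
noncomputable def N22sq (u : ℤ × ℤ → ℝ) : ℝ :=
  ∑ i : Fin 4, ∑ j : Fin 4, ∑' p : ℤ × ℤ, (Dop i (Dop j u) p) ^ 2

namespace Stmt11Aux

/-- square-summable predicate -/
def P (f : ℤ × ℤ → ℝ) : Prop := Summable fun p => (f p) ^ 2

lemma tsum_shift (f : ℤ × ℤ → ℝ) (a : ℤ × ℤ) : ∑' p, f (p + a) = ∑' p, f p :=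
  (Equiv.addRight a).tsum_eq f

lemma P_shift {f : ℤ × ℤ → ℝ} (hf : P f) (a : ℤ × ℤ) : P (fun p => f (p + a)) :=
  ((Equiv.addRight a).summable_iff (f := fun p => (f p) ^ 2)).2 hf

lemma P_sub {f g : ℤ × ℤ → ℝ} (hf : P f) (hg : P g) : P (fun p => f p - g p) := by
  refine Summable.of_nonneg_of_le (fun p => sq_nonneg _)
    (fun p => ?_) (((hf.mul_left 2)).add (hg.mul_left 2))
  show (f p - g p) ^ 2 ≤ 2 * f p ^ 2 + 2 * g p ^ 2
  nlinarith [sq_nonneg (f p + g p)]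

lemma P_D {f : ℤ × ℤ → ℝ} (hf : P f) (i : Fin 4) : P (Dop i f) :=
  P_sub (P_shift hf (latDir i)) hf

lemma P_mul {f g : ℤ × ℤ → ℝ} (hf : P f) (hg : P g) :
    Summable fun p => f p * g p := by
  refine Summable.of_abs (Summable.of_nonneg_of_le (fun p => abs_nonneg _)
    (fun p => ?_) (hf.add hg))
  have h1 := abs_mul (f p) (g p)
  nlinarith [sq_nonneg (|f p| - |g p|), sq_abs (f p), sq_abs (g p), abs_nonneg (f p),
    abs_nonneg (g p)]

/-- Summation by parts on ℤ². -/
lemma adj {f g : ℤ × ℤ → ℝ} (hf : P f) (hg : P g) (a : ℤ × ℤ) :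
    ∑' p, (f (p + -a) - f p) * g p = ∑' p, f p * (g (p + a) - g p) := by
  have h1 : Summable fun p => f (p + -a) * g p := P_mul (P_shift hf (-a)) hg
  have h2 : Summable fun p => f p * g p := P_mul hf hg
  have h3 : Summable fun p => f p * g (p + a) := P_mul hf (P_shift hg a)
  have key : ∑' p, f (p + -a) * g p = ∑' p, f p * g (p + a) := by
    rw [← tsum_shift (fun p => f (p + -a) * g p) a]
    simp [add_neg_cancel_right]
  calc ∑' p, (f (p + -a) - f p) * g p
      = ∑' p, (f (p + -a) * g p - f p * g p) := by
        apply tsum_congr; intro p; ring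
    _ = (∑' p, f (p + -a) * g p) - ∑' p, f p * g p := Summable.tsum_sub h1 h2
    _ = (∑' p, f p * g (p + a)) - ∑' p, f p * g p := by rw [key]
    _ = ∑' p, (f p * g (p + a) - f p * g p) := (Summable.tsum_sub h3 h2).symm
    _ = ∑' p, f p * (g (p + a) - g p) := by
        apply tsum_congr; intro p; ring

lemma Dcomm (i j : Fin 4) (u : ℤ × ℤ → ℝ) : Dop i (Dop j u) = Dop j (Dop i u) := by
  funext p
  simp only [Dop]
  rw [show p + latDir j + latDir i = p + latDir i + latDir j by ring]
  ring

/-- reflecting a direction preserves the l² norm of the difference -/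
lemma sq_tsum_neg (f : ℤ × ℤ → ℝ) (a : ℤ × ℤ) :
    ∑' p, (f (p + -a) - f p) ^ 2 = ∑' p, (f (p + a) - f p) ^ 2 := by
  rw [← tsum_shift (fun p => (f (p + -a) - f p) ^ 2) a]
  apply tsum_congr; intro p
  rw [add_neg_cancel_right]
  ring

lemma latDir2 : latDir 2 = -latDir 0 := by decide
lemma latDir3 : latDir 3 = -latDir 1 := by decide

lemma t2 (f : ℤ × ℤ → ℝ) : ∑' p, (Dop 2 f p) ^ 2 = ∑' p, (Dop 0 f p) ^ 2 := by
  simp only [Dop, latDir2]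
  exact sq_tsum_neg f (latDir 0)

lemma t3 (f : ℤ × ℤ → ℝ) : ∑' p, (Dop 3 f p) ^ 2 = ∑' p, (Dop 1 f p) ^ 2 := by
  simp only [Dop, latDir3]
  exact sq_tsum_neg f (latDir 1)

end Stmt11Aux

open Stmt11Aux in
/-- ‖Δu‖_{l²} = (1/2) N_{2,2}(u) on ℤ². -/
theorem stmt11 (u : ℤ × ℤ → ℝ) (hu : Memℓp u 2) :
    Real.sqrt (∑' p : ℤ × ℤ, (latLap u p) ^ 2) = (1 / 2) * Real.sqrt (N22sq u) := by
  -- u is square-summable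
  have hPu : P u := by
    have h := hu.summable (by norm_num)
    have : (2 : ENNReal).toReal = ((2 : ℕ) : ℝ) := by norm_num
    rw [this] at h
    simp only [Real.rpow_natCast] at h
    simpa [sq_abs, P] using h
  set f1 : ℤ × ℤ → ℝ := Dop 0 u with hf1
  set f2 : ℤ × ℤ → ℝ := Dop 1 u with hf2
  have hPf1 : P f1 := P_D hPu 0
  have hPf2 : P f2 := P_D hPu 1
  set A : ℝ := ∑' p, (Dop 0 f1 p) ^ 2 with hA
  set B : ℝ := ∑' p, (Dop 1 f2 p) ^ 2 with hB
  set C : ℝ := ∑' p, (Dop 1 f1 p) ^ 2 with hC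
  -- cross term via summation by parts
  have cross : ∑' p, (Dop 2 f1 p) * (Dop 3 f2 p) = C := by
    have hg : P (Dop 3 f2) := P_D hPf2 3
    have step1 : ∑' p, (Dop 2 f1 p) * (Dop 3 f2 p)
        = ∑' p, f1 p * (Dop 0 (Dop 3 f2) p) := by
      have := adj hPf1 hg (latDir 0)
      simpa only [Dop, latDir2] using this
    have step2 : ∑' p, f1 p * (Dop 0 (Dop 3 f2) p)
        = ∑' p, (Dop 0 f2 p) * (Dop 1 f1 p) := by
      rw [show Dop 0 (Dop 3 f2) = Dop 3 (Dop 0 f2) from Dcomm 0 3 f2]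
      calc ∑' p, f1 p * Dop 3 (Dop 0 f2) p
          = ∑' p, ((Dop 0 f2) (p + -latDir 1) - (Dop 0 f2) p) * f1 p := by
            refine tsum_congr fun p => ?_
            simp only [Dop, latDir3]
            ring
        _ = ∑' p, (Dop 0 f2) p * (f1 (p + latDir 1) - f1 p) :=
            adj (P_D hPf2 0) hPf1 (latDir 1)
        _ = ∑' p, Dop 0 f2 p * Dop 1 f1 p := rfl
    have e12 : Dop 0 f2 = Dop 1 f1 := by
      rw [hf1, hf2]; exact Dcomm 0 1 u
    rw [step1, step2, e12]
    exact tsum_congr fun p => by ring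
  -- the Laplacian as sum of two second differences
  have lD0 : latDir 0 = (1, 0) := rfl
  have lD1 : latDir 1 = (0, 1) := rfl
  have lD2 : latDir 2 = (-1, 0) := rfl
  have lD3 : latDir 3 = (0, -1) := rfl
  have lap_eq : ∀ p, latLap u p = -(Dop 2 f1 p + Dop 3 f2 p) := by
    intro p
    obtain ⟨x, y⟩ := p
    simp only [latLap, Dop, Fin.sum_univ_four, hf1, hf2, lD0, lD1, lD2, lD3,
      Prod.mk_add_mk]
    ring_nf
  -- LHS sum
  have ha : P (Dop 2 f1) := P_D hPf1 2
  have hb : P (Dop 3 f2) := P_D hPf2 3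
  have hab : Summable fun p => (Dop 2 f1 p) * (Dop 3 f2 p) := P_mul ha hb
  have hSa : ∑' p, (Dop 2 f1 p) ^ 2 = A := by rw [hA]; exact t2 f1
  have hSb : ∑' p, (Dop 3 f2 p) ^ 2 = B := by rw [hB]; exact t3 f2
  have lhs_eq : ∑' p : ℤ × ℤ, (latLap u p) ^ 2 = A + B + 2 * C := by
    have e : ∀ p : ℤ × ℤ, (latLap u p) ^ 2
        = (Dop 2 f1 p) ^ 2 + (Dop 3 f2 p) ^ 2 + 2 * ((Dop 2 f1 p) * (Dop 3 f2 p)) := by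
      intro p; rw [lap_eq p]; ring
    rw [tsum_congr e, Summable.tsum_add (ha.add hb) (hab.mul_left 2), Summable.tsum_add ha hb,
      tsum_mul_left, hSa, hSb, cross]
  -- reduce the 16 terms of N22sq
  have term00 : ∑' p, (Dop 0 (Dop 0 u) p) ^ 2 = A := rfl
  have term11 : ∑' p, (Dop 1 (Dop 1 u) p) ^ 2 = B := rfl
  have term10 : ∑' p, (Dop 1 (Dop 0 u) p) ^ 2 = C := rfl
  have e01 : ∑' p, (Dop 0 (Dop 1 u) p) ^ 2 = C := by
    rw [Dcomm 0 1 u]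
    all_goals first | exact term00 | exact term11 | exact term10 | exact e01
  have term02 : ∑' p, (Dop 0 (Dop 2 u) p) ^ 2 = A := by
    rw [Dcomm 0 2 u, t2]
    all_goals first | exact term00 | exact term11 | exact term10 | exact e01
  have term20 : ∑' p, (Dop 2 (Dop 0 u) p) ^ 2 = A := by
    rw [t2]
    all_goals first | exact term00 | exact term11 | exact term10 | exact e01
  have term22 : ∑' p, (Dop 2 (Dop 2 u) p) ^ 2 = A := by
    rw [t2, Dcomm 0 2 u, t2]
    all_goals first | exact term00 | exact term11 | exact term10 | exact e01
  have term13 : ∑' p, (Dop 1 (Dop 3 u) p) ^ 2 = B := by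
    rw [Dcomm 1 3 u, t3]
    all_goals first | exact term00 | exact term11 | exact term10 | exact e01
  have term31 : ∑' p, (Dop 3 (Dop 1 u) p) ^ 2 = B := by
    rw [t3]
    all_goals first | exact term00 | exact term11 | exact term10 | exact e01
  have term33 : ∑' p, (Dop 3 (Dop 3 u) p) ^ 2 = B := by
    rw [t3, Dcomm 1 3 u, t3]
    all_goals first | exact term00 | exact term11 | exact term10 | exact e01
  have term01 : ∑' p, (Dop 0 (Dop 1 u) p) ^ 2 = C := e01
  have term03 : ∑' p, (Dop 0 (Dop 3 u) p) ^ 2 = C := by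
    rw [Dcomm 0 3 u, t3]
    all_goals first | exact term00 | exact term11 | exact term10 | exact e01
  have term30 : ∑' p, (Dop 3 (Dop 0 u) p) ^ 2 = C := by
    rw [t3]
    all_goals first | exact term00 | exact term11 | exact term10 | exact e01
  have term12 : ∑' p, (Dop 1 (Dop 2 u) p) ^ 2 = C := by
    rw [Dcomm 1 2 u, t2]
    all_goals first | exact term00 | exact term11 | exact term10 | exact e01
  have term21 : ∑' p, (Dop 2 (Dop 1 u) p) ^ 2 = C := by
    rw [t2]
    all_goals first | exact term00 | exact term11 | exact term10 | exact e01
  have term23 : ∑' p, (Dop 2 (Dop 3 u) p) ^ 2 = C := by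
    rw [t2, Dcomm 0 3 u, t3]
    all_goals first | exact term00 | exact term11 | exact term10 | exact e01
  have term32 : ∑' p, (Dop 3 (Dop 2 u) p) ^ 2 = C := by
    rw [t3, Dcomm 1 2 u, t2]
    all_goals first | exact term00 | exact term11 | exact term10 | exact e01
  have N_eq : N22sq u = 4 * A + 4 * B + 8 * C := by
    rw [N22sq]
    simp only [Fin.sum_univ_four]
    rw [term00, term01, term02, term03, term10, term11, term12, term13,
      term20, term21, term22, term23, term30, term31, term32, term33]
    ring
  rw [lhs_eq, N_eq,
    show A + B + 2 * C = (1/2)^2 * (4 * A + 4 * B + 8 * C) by ring,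
    Real.sqrt_mul (by positivity), Real.sqrt_sq (by norm_num)]
end
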